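/- arXiv:1210.8068 — 8 statements merged into one kernel-verified Lean document; each statement's English description precedes it below -/
import Mathlib

section
/- The gauge (Minkowski) seminorm associated to the O-lattice Λ = Σ_α p^{n(α)} t^α in F is given by ‖x‖ = sup_α |x(α)| q^{n(α)}, where x = Σ_α x(α) t^α. That is, inf{|a| : a ∈ K^×, x ∈ aΛ} = sup_α |x(α)| q^{n(α)}. -/
open Filter

variable {K : Type*}

noncomputable def wB (q : ℝ) : WithBot ℤ → ℝ :=
  WithBot.recBotCoe 0 fun k : ℤ => q ^ k

/-- `b ∈ a·𝔭^m` for `m ∈ ℤ ∪ {-∞}`, i.e. `‖b‖ ≤ ‖a‖ q^{-m}`, with `a·𝔭^{-∞} = K`. -/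
def memBScaled [NormedField K] (q : ℝ) (b a : K) : WithBot ℤ → Prop :=
  WithBot.recBotCoe True fun k : ℤ => ‖b‖ ≤ ‖a‖ * q ^ (-k)

/-- Conditions (i)–(ii) of Proposition 2.1 (open lattices) for a net
`(n(α))_{α ∈ ℤ^m}` valued in `ℤ ∪ {-∞}`; positions `0,…,r-1` are the
mixed-characteristic levels and `r,…,m-1` the equal-characteristic ones, later
positions being more significant. -/
def OpenCondI {m : ℕ} (r : ℕ) (n : (Fin m → ℤ) → WithBot ℤ) : Prop :=
  (∀ l : Fin m, r ≤ (l : ℕ) → ∀ β : Fin m → ℤ, ∃ k₀ : ℤ, ∀ α : Fin m → ℤ,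
      (∀ j : Fin m, l < j → α j = β j) → k₀ ≤ α l → n α = ⊥) ∧
  (∀ l : Fin m, (l : ℕ) < r → ∀ β : Fin m → ℤ,
      (∃ c : ℤ, ∀ α : Fin m → ℤ,
        (∀ j : Fin m, l < j → α j = β j) → n α ≤ (c : WithBot ℤ)) ∧
      (∀ d : ℤ, ∃ k₀ : ℤ, ∀ α : Fin m → ℤ,
        (∀ j : Fin m, l < j → α j = β j) → k₀ ≤ α l → n α ≤ (d : WithBot ℤ)))

/-- The condition defining `K{{t_1}}…{{t_m}}` on coefficient families. -/
def MixedAdm [NormedField K] : ∀ {m : ℕ}, ((Fin m → ℤ) → K) → Prop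
  | 0, _ => True
  | m + 1, x =>
      BddAbove (Set.range fun γ => ‖x γ‖) ∧
      Tendsto (fun i : ℤ => ⨆ β : Fin m → ℤ, ‖x (Fin.snoc β i)‖) atBot (nhds 0) ∧
      ∀ i : ℤ, MixedAdm fun β => x (Fin.snoc β i)

/-- The condition on `x : ℤ^m → K` to be the coefficient family of an element of the
standard field `F = K{{t_1}}…{{t_r}}((t_{r+1}))…((t_m))`. -/
def StdAdm [NormedField K] (r : ℕ) : ∀ {m : ℕ}, ((Fin m → ℤ) → K) → Prop
  | 0, _ => True
  | m + 1, x =>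
      if m + 1 ≤ r then MixedAdm x
      else
        (∃ i₀ : ℤ, ∀ i < i₀, ∀ β, x (Fin.snoc β i) = 0) ∧
        ∀ i : ℤ, StdAdm r fun β => x (Fin.snoc β i)


section AuxGauge

lemma wB_nonneg {q : ℝ} (hq : 0 < q) (w : WithBot ℤ) : 0 ≤ wB q w := by
  induction w using WithBot.recBotCoe with
  | bot => simp [wB]
  | coe k => simp only [wB, WithBot.recBotCoe_coe]; positivity

lemma wB_coe (q : ℝ) (k : ℤ) : wB q (k : WithBot ℤ) = q ^ k := rfl

lemma wB_bot (q : ℝ) : wB q ⊥ = 0 := rfl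

lemma wB_le {q : ℝ} (hq : 1 < q) {w : WithBot ℤ} {c : ℤ} (h : w ≤ (c : WithBot ℤ)) :
    wB q w ≤ q ^ c := by
  induction w using WithBot.recBotCoe with
  | bot => rw [wB_bot]; positivity
  | coe k =>
    rw [wB_coe]
    exact zpow_le_zpow_right₀ hq.le (WithBot.coe_le_coe.mp h)

lemma OpenCondI.slice {m r : ℕ} {n : (Fin (m + 1) → ℤ) → WithBot ℤ}
    (h : OpenCondI r n) (i : ℤ) : OpenCondI r fun β => n (Fin.snoc β i) := by
  have key : ∀ (l : Fin m) (β : Fin m → ℤ) (α : Fin m → ℤ),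
      (∀ j : Fin m, l < j → α j = β j) →
      ∀ j : Fin (m + 1), l.castSucc < j →
        (Fin.snoc α i : Fin (m + 1) → ℤ) j = (Fin.snoc β i : Fin (m + 1) → ℤ) j := by
    intro l β α hα j hj
    induction j using Fin.lastCases with
    | last => simp
    | cast j' =>
      simp only [Fin.snoc_castSucc]
      exact hα j' (Fin.castSucc_lt_castSucc_iff.mp hj)
  constructor
  · intro l hl β
    obtain ⟨k₀, hk₀⟩ := h.1 l.castSucc (by simpa using hl) (Fin.snoc β i)
    refine ⟨k₀, fun α hα hle => hk₀ _ (key l β α hα) ?_⟩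
    simpa using hle
  · intro l hl β
    obtain ⟨⟨c, hc⟩, hd⟩ := h.2 l.castSucc (by simpa using hl) (Fin.snoc β i)
    refine ⟨⟨c, fun α hα => hc _ (key l β α hα)⟩, fun d => ?_⟩
    obtain ⟨k₀, hk₀⟩ := hd d
    refine ⟨k₀, fun α hα hle => hk₀ _ (key l β α hα) ?_⟩
    simpa using hle

lemma bddAbove_gauge_aux {K : Type*} [NontriviallyNormedField K] {q : ℝ} (hq : 1 < q) :
    ∀ (m r : ℕ), r ≤ m → ∀ (n : (Fin m → ℤ) → WithBot ℤ), OpenCondI r n →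
    ∀ (x : (Fin m → ℤ) → K), StdAdm r x →
    BddAbove (Set.range fun α => ‖x α‖ * wB q (n α)) := by
  have hq0 : (0 : ℝ) < q := lt_trans one_pos hq
  intro m
  induction m with
  | zero =>
    intro r _ n _ x _
    haveI : Unique (Fin 0 → ℤ) := ⟨⟨fun i => i.elim0⟩, fun f => funext fun i => i.elim0⟩
    exact (Set.finite_range _).bddAbove
  | succ m ih =>
    intro r hr n hn x hx
    by_cases hmr : m + 1 ≤ r
    · -- fully mixed: x bounded and n uniformly bounded above
      rw [StdAdm, if_pos hmr] at hx
      obtain ⟨⟨B, hB⟩, -, -⟩ := hx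
      obtain ⟨⟨c, hc⟩, -⟩ := hn.2 (Fin.last m) (by simpa using hmr) (fun _ => 0)
      have hB0 : 0 ≤ B := le_trans (norm_nonneg (x fun _ => 0)) (hB ⟨_, rfl⟩)
      refine ⟨B * q ^ c, ?_⟩
      rintro y ⟨α, rfl⟩
      have hnc : n α ≤ (c : WithBot ℤ) := by
        refine hc α fun j hj => absurd hj (not_lt.mpr (Fin.le_last j))
      exact mul_le_mul (hB ⟨α, rfl⟩) (wB_le hq hnc) (wB_nonneg hq0 _) hB0
    · have hrm : r ≤ m := by omega
      rw [StdAdm, if_neg hmr] at hx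
      obtain ⟨⟨i₀, hi₀⟩, hsl⟩ := hx
      obtain ⟨k₁, hk₁⟩ := hn.1 (Fin.last m) (by simpa using hrm) (fun _ => 0)
      have hsub : (Set.range fun α => ‖x α‖ * wB q (n α)) ⊆
          insert 0 (⋃ i ∈ Set.Icc i₀ k₁,
            Set.range fun β : Fin m → ℤ =>
              ‖x (Fin.snoc β i)‖ * wB q (n (Fin.snoc β i))) := by
        rintro y ⟨α, rfl⟩
        have hα : Fin.snoc (Fin.init α) (α (Fin.last m)) = α := Fin.snoc_init_self α
        by_cases h1 : α (Fin.last m) < i₀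
        · have hx0 : x α = 0 := by
            conv_lhs => rw [← hα]
            exact hi₀ _ h1 _
          exact Set.mem_insert_iff.mpr (Or.inl (by simp [hx0]))
        · by_cases h2 : k₁ ≤ α (Fin.last m)
          · have hn0 : n α = ⊥ :=
              hk₁ α (fun j hj => absurd hj (not_lt.mpr (Fin.le_last j))) h2
            exact Set.mem_insert_iff.mpr (Or.inl (by simp [hn0, wB_bot]))
          · refine Set.mem_insert_iff.mpr (Or.inr ?_)
            refine Set.mem_biUnion (Set.mem_Icc.mpr ⟨not_lt.mp h1, (not_le.mp h2).le⟩)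
              ⟨Fin.init α, by simp only [hα]⟩
      refine (BddAbove.mono hsub) (BddAbove.insert 0 ?_)
      rw [Set.Finite.bddAbove_biUnion (Set.finite_Icc i₀ k₁)]
      intro i _
      exact ih r hrm _ (hn.slice i) _ (hsl i)

end AuxGauge

/-- the gauge (Minkowski) seminorm of the open lattice
`Λ = Σ_α 𝔭^{n(α)} t^α` of `F`, namely `inf {|a| : a ∈ K^×, x ∈ aΛ}`, equals
`sup_α |x(α)| q^{n(α)}` for every `x = Σ_α x(α) t^α ∈ F`. -/
theorem gauge_seminorm_eq_sup [NontriviallyNormedField K]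
    (hna : IsNonarchimedean fun a : K => ‖a‖) (q : ℝ) (hq : 1 < q)
    (hval : ∀ a : K, a ≠ 0 → ∃ s : ℤ, ‖a‖ = q ^ s)
    (hsurj : ∀ s : ℤ, ∃ a : K, ‖a‖ = q ^ s)
    (m r : ℕ) (hm : 1 ≤ m) (hr : r ≤ m)
    (n : (Fin m → ℤ) → WithBot ℤ) (hn : OpenCondI r n)
    (x : (Fin m → ℤ) → K) (hx : StdAdm r x) :
    sInf {s : ℝ | ∃ a : K, a ≠ 0 ∧ ‖a‖ = s ∧
        ∀ α : Fin m → ℤ, memBScaled q (x α) a (n α)} =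
      ⨆ α : Fin m → ℤ, ‖x α‖ * wB q (n α) := by
  classical
  have hq0 : (0 : ℝ) < q := lt_trans one_pos hq
  set f : (Fin m → ℤ) → ℝ := fun α => ‖x α‖ * wB q (n α) with hf
  set T : Set ℝ := {s : ℝ | ∃ a : K, a ≠ 0 ∧ ‖a‖ = s ∧
      ∀ α : Fin m → ℤ, memBScaled q (x α) a (n α)} with hT
  have hbdd : BddAbove (Set.range f) := bddAbove_gauge_aux hq m r hr n hn x hx
  have hfnn : ∀ α, 0 ≤ f α := fun α => mul_nonneg (norm_nonneg _) (wB_nonneg hq0 _)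
  set S := ⨆ α, f α with hSdef
  have hS_ub : ∀ α, f α ≤ S := fun α => le_ciSup hbdd α
  have hS0 : 0 ≤ S := le_trans (hfnn default) (hS_ub default)
  -- values of f are 0 or powers of q
  have hval' : ∀ α, f α = 0 ∨ ∃ u : ℤ, f α = q ^ u := by
    intro α
    by_cases hx0 : x α = 0
    · left; simp [hf, hx0]
    · cases hnα : n α with
      | bot => left; simp [hf, hnα, wB_bot]
      | coe k =>
        obtain ⟨s, hs⟩ := hval (x α) hx0
        right
        exact ⟨s + k, by simp [hf, hnα, wB_coe, hs, zpow_add₀ (ne_of_gt hq0)]⟩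
  -- lower bound property
  have claimA : ∀ s ∈ T, S ≤ s := by
    rintro s ⟨a, ha0, rfl, hmem⟩
    refine ciSup_le fun α => ?_
    have := hmem α
    cases hnα : n α with
    | bot => simpa [hf, hnα, wB_bot] using norm_nonneg a
    | coe k =>
      rw [hnα] at this
      have h1 : ‖x α‖ ≤ ‖a‖ * q ^ (-k) := this
      have hk0 : (0 : ℝ) < q ^ k := by positivity
      calc f α = ‖x α‖ * q ^ k := by rw [hf]; simp [hnα, wB_coe]
        _ ≤ (‖a‖ * q ^ (-k)) * q ^ k := by
            exact mul_le_mul_of_nonneg_right h1 hk0.le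
        _ = ‖a‖ := by
            rw [mul_assoc, ← zpow_add₀ (ne_of_gt hq0)]
            simp
  -- membership criterion
  have claimB : ∀ a : K, S ≤ ‖a‖ → ∀ α, memBScaled q (x α) a (n α) := by
    intro a ha α
    cases hnα : n α with
    | bot => trivial
    | coe k =>
      show ‖x α‖ ≤ ‖a‖ * q ^ (-k)
      have h1 : ‖x α‖ * q ^ k ≤ ‖a‖ := by
        calc ‖x α‖ * q ^ k = f α := by rw [hf]; simp [hnα, wB_coe]
          _ ≤ S := hS_ub α
          _ ≤ ‖a‖ := ha
      have hk0 : (0 : ℝ) < q ^ k := by positivity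
      rw [zpow_neg, ← div_eq_mul_inv, le_div_iff₀ hk0]
      exact h1
  have hTlb : ∀ s ∈ T, (0 : ℝ) ≤ s := by
    rintro s ⟨a, -, rfl, -⟩; exact norm_nonneg a
  rcases eq_or_lt_of_le hS0 with hS | hS
  · -- S = 0
    have hTne : T.Nonempty := by
      obtain ⟨a, ha⟩ := hsurj 0
      have ha0 : a ≠ 0 := by
        intro h; rw [h, norm_zero] at ha; simp at ha
      exact ⟨‖a‖, a, ha0, rfl, claimB a (by rw [← hS]; exact norm_nonneg a)⟩
    rw [← hS]
    refine le_antisymm ?_ (le_csInf hTne hTlb)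
    rw [Real.sInf_le_iff ⟨0, hTlb⟩ hTne]
    intro ε hε
    obtain ⟨N, hN⟩ := exists_pow_lt_of_lt_one hε (inv_lt_one_of_one_lt₀ hq)
    obtain ⟨a, ha⟩ := hsurj (-(N : ℤ))
    have ha0 : a ≠ 0 := by
      intro h; rw [h, norm_zero] at ha
      have : (0 : ℝ) < q ^ (-(N : ℤ)) := by positivity
      linarith [this.trans_eq ha.symm]
    refine ⟨‖a‖, ⟨a, ha0, rfl, claimB a (by rw [← hS]; exact norm_nonneg a)⟩, ?_⟩
    rw [ha, zero_add]
    calc q ^ (-(N : ℤ)) = q⁻¹ ^ N := by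
          rw [zpow_neg, ← inv_zpow, zpow_natCast]
      _ < ε := hN
  · -- S > 0
    have h1 : S / q < S := div_lt_self hS hq
    obtain ⟨α₀, hα₀⟩ := exists_lt_of_lt_ciSup h1
    have hα₀pos : 0 < f α₀ := lt_of_le_of_lt (div_pos hS hq0).le hα₀
    obtain ⟨u, hu⟩ : ∃ u : ℤ, f α₀ = q ^ u := by
      rcases hval' α₀ with h0 | h; · rw [h0] at hα₀pos; exact absurd hα₀pos (lt_irrefl 0)
      · exact h
    have hub : ∀ α, f α ≤ q ^ u := by
      intro α
      rcases hval' α with h0 | ⟨u', hu'⟩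
      · rw [h0]; positivity
      · rw [hu']
        by_contra hlt
        push_neg at hlt
        have huu : u < u' := (zpow_lt_zpow_iff_right₀ hq).mp hlt
        have h2 : q ^ (u + 1) ≤ q ^ u' := zpow_le_zpow_right₀ hq.le (by omega)
        have h3 : q ^ (u + 1) = q * f α₀ := by
          rw [hu, zpow_add₀ (ne_of_gt hq0), zpow_one, mul_comm]
        have h4 : S < q * f α₀ := by
          have := (div_lt_iff₀ hq0).mp hα₀
          linarith [this]
        have h5 : f α ≤ S := hS_ub α
        rw [hu'] at h5
        linarith [h2, h3 ▸ h2, h4]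
    have hSu : S = q ^ u := le_antisymm (ciSup_le hub) (hu ▸ hS_ub α₀)
    obtain ⟨a, ha⟩ := hsurj u
    have ha0 : a ≠ 0 := by
      intro h; rw [h, norm_zero] at ha
      have : (0 : ℝ) < q ^ u := by positivity
      linarith [this.trans_eq ha.symm]
    have hmemS : S ∈ T := ⟨a, ha0, by rw [ha, hSu], claimB a (by rw [ha, hSu])⟩
    exact le_antisymm (csInf_le ⟨0, hTlb⟩ hmemS) (le_csInf ⟨S, hmemS⟩ claimA)
end

section
/- For each fixed index i_0 ∈ Z, the coefficient projection π_{i_0} : K((t)) → K, Σ x_i t^i ↦ x_{i_0}, is a continuous K-linear map when K((t)) carries the higher topology and K the p-adic topology. -/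
open Filter

variable {K : Type*}

noncomputable def wT (q : ℝ) : WithTop ℤ → ℝ :=
  WithTop.recTopCoe 0 fun k : ℤ => q ^ (-k)

/-- `a ∈ 𝔭^m` for `m ∈ ℤ ∪ {-∞}`, with `𝔭^{-∞} = K`. -/
def memB [NormedField K] (q : ℝ) (a : K) : WithBot ℤ → Prop :=
  WithBot.recBotCoe True fun k : ℤ => ‖a‖ ≤ q ^ (-k)

/-- `a ∈ 𝔭^m` for `m ∈ ℤ ∪ {∞}`, with `𝔭^{∞} = 0`. -/
def memT [NormedField K] (q : ℝ) (a : K) : WithTop ℤ → Prop :=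
  WithTop.recTopCoe (a = 0) fun k : ℤ => ‖a‖ ≤ q ^ (-k)

/-- The set `Λ = Σ_i 𝔭^{n_i} t^i` in `K((t))`. -/
def latticeSet [NormedField K] (q : ℝ) (n : ℤ → WithBot ℤ) : Set (LaurentSeries K) :=
  {x | ∀ i : ℤ, memB q (x.coeff i) (n i)}

/-- The set `B = Σ_i 𝔭^{k_i} t^i` in `K((t))`. -/
def bddSet [NormedField K] (q : ℝ) (k : ℤ → WithTop ℤ) : Set (LaurentSeries K) :=
  {x | ∀ i : ℤ, memT q (x.coeff i) (k i)}

/-- The admissible seminorm `‖Σ x_i t^i‖ = sup_i |x_i| q^{n_i}` (with `q^{-∞} = 0`). -/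
noncomputable def sn [NormedField K] (q : ℝ) (n : ℤ → WithBot ℤ) (x : LaurentSeries K) : ℝ :=
  ⨆ i : ℤ, ‖x.coeff i‖ * wB q (n i)

/-- Admissibility of the net `(n_i)`: `n_i = -∞` for all sufficiently large `i`. -/
def AdmNet (n : ℤ → WithBot ℤ) : Prop := ∃ i₀ : ℤ, ∀ i ≥ i₀, n i = ⊥

lemma wB_zero (q : ℝ) : wB q 0 = 1 := by
  have : (0 : WithBot ℤ) = ((0 : ℤ) : WithBot ℤ) := rfl
  rw [this]
  show q ^ (0 : ℤ) = 1
  simp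

/-- for fixed `i₀ ∈ ℤ`, the coefficient projection
`π_{i₀} : K((t)) → K` is a continuous `K`-linear map: it is additive, `K`-homogeneous, and
bounded by an admissible seminorm (which is equivalent to continuity for the locally
convex higher topology, the family of admissible seminorms being directed). -/
theorem coeff_projection_continuous_linear [NontriviallyNormedField K]
    (hna : IsNonarchimedean fun a : K => ‖a‖) (q : ℝ) (hq : 1 < q) (i₀ : ℤ) :
    (∀ x y : LaurentSeries K, (x + y).coeff i₀ = x.coeff i₀ + y.coeff i₀) ∧
    (∀ (a : K) (x : LaurentSeries K), (a • x).coeff i₀ = a * x.coeff i₀) ∧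
    (∃ n : ℤ → WithBot ℤ, AdmNet n ∧
      ∀ x : LaurentSeries K, ‖x.coeff i₀‖ ≤ sn q n x) := by
  refine ⟨fun x y => by simp, fun a x => by simp, ?_⟩
  refine ⟨fun i => if i = i₀ then (0 : ℤ) else ⊥, ⟨i₀ + 1, fun i hi => ?_⟩, fun x => ?_⟩
  · have : i ≠ i₀ := by omega
    simp [this]
  · have hb : BddAbove (Set.range fun i : ℤ =>
        ‖x.coeff i‖ * wB q (if i = i₀ then (0 : ℤ) else ⊥)) := by
      refine ⟨‖x.coeff i₀‖, ?_⟩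
      rintro r ⟨i, rfl⟩
      by_cases h : i = i₀
      · subst h; simp [wB_zero]
      · simp [h, wB]
    have := le_ciSup hb i₀
    simpa [sn, wB_zero] using this
end

section
/- Every continuous linear form on K((t)) arises from the multiplication pairing: if w : K((t)) → K is K-linear and continuous for the higher topology, then setting x_i = w(t^{−i}) for i ∈ Z, the family (x_i) satisfies x_i = 0 for all sufficiently large i (so x = Σ_i x_i t^i ∈ K((t))), and w(y) = π_0(xy) for all y ∈ K((t)). -/
open Filter

variable {K : Type*}

/-! Continuity bounds `‖w y‖` by an admissible seminorm, which vanishes on every series whose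
coefficients below some `N` vanish, so `w` kills these tails; in particular `w (t^{-i}) = 0` for
`i ≤ -N`, so `x` is a Laurent series, of order `> -N`. Then `y ↦ π₀(x y)` kills the same tails, and
it agrees with `w` on monomials; since a series is a Laurent polynomial plus a tail, the two linear
forms coincide. -/

open HahnSeries

theorem HahnSeries.coeff_mul_eq_zero_of_lt {Γ R : Type*} [AddCommMonoid Γ] [LinearOrder Γ]
    [IsOrderedCancelAddMonoid Γ] [NonUnitalNonAssocSemiring R] {x y : R⟦Γ⟧} {a b c : Γ}
    (hx : ∀ i < a, x.coeff i = 0) (hy : ∀ j < b, y.coeff j = 0) (hc : c < a + b) :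
    (x * y).coeff c = 0 := by
  apply coeff_eq_zero_of_lt_orderTop
  calc (c : WithTop Γ) < a + b := by exact_mod_cast hc
    _ ≤ x.orderTop + y.orderTop :=
      add_le_add (le_orderTop_iff_forall.2 fun i hi => hx i (by exact_mod_cast hi))
        (le_orderTop_iff_forall.2 fun j hj => hy j (by exact_mod_cast hj))
    _ ≤ (x * y).orderTop := orderTop_add_le_mul

namespace LaurentSeries

variable {R : Type*}

noncomputable def pairing [CommSemiring R] (x : LaurentSeries R) : LaurentSeries R →ₗ[R] R where
  toFun y := (x * y).coeff 0
  map_add' y z := by rw [mul_add, coeff_add]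
  map_smul' c y := by
    rw [← C_mul_eq_smul, mul_left_comm, C_mul_eq_smul, HahnSeries.coeff_smul, RingHom.id_apply]

theorem pairing_single [CommSemiring R] (x : LaurentSeries R) (j : ℤ) (r : R) :
    pairing x (single j r) = x.coeff (-j) * r := by
  simp [pairing, coeff_mul_single]

theorem truncLT_eq_sum_single [AddCommMonoid R] (N : ℤ) (y : LaurentSeries R) :
    truncLT N y = ∑ j ∈ Finset.Ico y.order N, single j (y.coeff j) := by
  ext k
  rw [HahnSeries.coeff_truncLT, coeff_sum]
  by_cases hk : k ∈ Finset.Ico y.order N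
  · rw [Finset.sum_eq_single_of_mem k hk fun j _ hjk => coeff_single_of_ne (Ne.symm hjk),
      coeff_single_same, if_pos (Finset.mem_Ico.1 hk).2]
  · rw [Finset.sum_eq_zero fun j hj => coeff_single_of_ne (ne_of_mem_of_not_mem hj hk).symm]
    rw [Finset.mem_Ico, not_and_or, not_le, not_lt] at hk
    rcases hk with hk | hk
    · rw [coeff_eq_zero_of_lt_order hk, ite_self]
    · rw [if_neg (not_lt.2 hk)]

/-- Every Laurent series is a Laurent polynomial plus a series of order at least `N`. -/
theorem linearMap_ext_of_tail [CommRing R] {M : Type*} [AddCommGroup M] [Module R M]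
    {f g : LaurentSeries R →ₗ[R] M} (N : ℤ) (hsingle : ∀ j, f (single j 1) = g (single j 1))
    (htail : ∀ y : LaurentSeries R, (∀ k < N, y.coeff k = 0) → f y = g y) : f = g := by
  ext y
  have hmono : ∀ j c, f (single j c) = g (single j c) := fun j c => by
    have hsmul : single j c = c • single j (1 : R) := by
      ext k
      simp [coeff_single]
    rw [hsmul, map_smul, map_smul, hsingle]
  have htrunc : f (truncLT N y) = g (truncLT N y) := by
    simp only [truncLT_eq_sum_single, map_sum, hmono]
  have hrest : f (y - truncLT N y) = g (y - truncLT N y) :=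
    htail _ fun k hk => by rw [coeff_sub, coeff_truncLT_of_lt hk, sub_self]
  calc f y = f (truncLT N y) + f (y - truncLT N y) := by rw [← map_add, add_sub_cancel]
    _ = g y := by rw [htrunc, hrest, ← map_add, add_sub_cancel]

end LaurentSeries

section AdmissibleSeminorm

variable [NormedField K] {q : ℝ} {n : ℤ → WithBot ℤ}

theorem sn_eq_zero_of_coeff_eq_zero {y : LaurentSeries K} (hy : ∀ i, n i ≠ ⊥ → y.coeff i = 0) :
    sn q n y = 0 := by
  have hterm : ∀ i, ‖y.coeff i‖ * wB q (n i) = 0 := fun i => by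
    by_cases hi : n i = ⊥
    · simp [hi, wB]
    · simp [hy i hi]
  simp only [sn, hterm, ciSup_const]

theorem AdmNet.exists_forall_eq_zero_of_norm_le_mul_sn (hn : AdmNet n) {E : Type*}
    [NormedAddCommGroup E] {f : LaurentSeries K → E} {C : ℝ}
    (hf : ∀ y, ‖f y‖ ≤ C * sn q n y) :
    ∃ N : ℤ, ∀ y : LaurentSeries K, (∀ k < N, y.coeff k = 0) → f y = 0 := by
  obtain ⟨N, hN⟩ := hn
  refine ⟨N, fun y hy => norm_le_zero_iff.1 ?_⟩
  have hsn : sn q n y = 0 :=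
    sn_eq_zero_of_coeff_eq_zero fun i hi => hy i (not_le.1 fun hNi => hi (hN i hNi))
  simpa [hsn] using hf y

end AdmissibleSeminorm

theorem continuous_linear_form_is_pairing_general [NontriviallyNormedField K]
    (q : ℝ)
    (w : LaurentSeries K →ₗ[K] K)
    (hw : ∃ n : ℤ → WithBot ℤ, AdmNet n ∧ ∃ C : ℝ, 0 < C ∧
      ∀ y : LaurentSeries K, ‖w y‖ ≤ C * sn q n y) :
    (∃ i₀ : ℤ, ∀ i ≤ i₀, w (HahnSeries.single (-i) (1 : K)) = 0) ∧
    ∃ x : LaurentSeries K, (∀ i : ℤ, x.coeff i = w (HahnSeries.single (-i) (1 : K))) ∧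
      ∀ y : LaurentSeries K, w y = (x * y).coeff 0 := by
  obtain ⟨n, hn, C, -, hbound⟩ := hw
  obtain ⟨N, hvanish⟩ := hn.exists_forall_eq_zero_of_norm_le_mul_sn hbound
  have hx0 : ∀ i ≤ -N, w (single (-i) (1 : K)) = 0 := fun i hi =>
    hvanish _ fun k hk => coeff_single_of_ne (by omega)
  let x : LaurentSeries K := ofSuppBddBelow (fun i => w (single (-i) 1))
    ⟨-N, fun i hi => not_lt.1 fun hlt => hi (hx0 i hlt.le)⟩
  have hx : ∀ i, x.coeff i = w (single (-i) 1) := fun i => rfl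
  refine ⟨⟨-N, hx0⟩, x, hx, fun y => ?_⟩
  suffices w = LaurentSeries.pairing x from LinearMap.congr_fun this y
  refine LaurentSeries.linearMap_ext_of_tail N (fun j => ?_) fun z hz => ?_
  · rw [LaurentSeries.pairing_single, mul_one, hx, neg_neg]
  · rw [hvanish z hz]
    exact (coeff_mul_eq_zero_of_lt (a := 1 - N) (fun i hi => (hx i).trans (hx0 i (by omega))) hz
      (by omega)).symm

/-- every continuous linear form `w` on `K((t))` (continuity for the
locally convex higher topology being equivalent to a bound by an admissible seminorm,
the family of admissible seminorms being directed) arises from the multiplication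
pairing: the coefficients `x_i = w(t^{-i})` vanish for all `i` beyond a bound (so that
`x = Σ_i x_i t^i` defines an element of `K((t))`), and `w(y) = π₀(xy)` for all `y`. -/
theorem continuous_linear_form_is_pairing [NontriviallyNormedField K]
    (hna : IsNonarchimedean fun a : K => ‖a‖) (q : ℝ) (hq : 1 < q)
    (w : LaurentSeries K →ₗ[K] K)
    (hw : ∃ n : ℤ → WithBot ℤ, AdmNet n ∧ ∃ C : ℝ, 0 < C ∧
      ∀ y : LaurentSeries K, ‖w y‖ ≤ C * sn q n y) :
    (∃ i₀ : ℤ, ∀ i ≤ i₀, w (HahnSeries.single (-i) (1 : K)) = 0) ∧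
    ∃ x : LaurentSeries K, (∀ i : ℤ, x.coeff i = w (HahnSeries.single (-i) (1 : K))) ∧
      ∀ y : LaurentSeries K, w y = (x * y).coeff 0 :=
  continuous_linear_form_is_pairing_general q w hw
end

section
/- In K{{t}}, the mixed-characteristic two-dimensional field, let C = Σ_i p^{k_i} t^i be a basic bounded O-submodule with (k_i) bounded below. If there exists a decreasing sequence (j_h) ⊂ Z_{<0} with (k_{j_h}) bounded above, then C is not compactoid, i.e. there is an open lattice Λ such that C ⊄ Λ + Ox_1 + ⋯ + Ox_m for any finitely many x_1,…,x_m ∈ K{{t}}. -/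
open Filter

variable {K : Type*}

/-- The two-dimensional mixed-characteristic local field `K{{t}}`, realised as the set of
coefficient families `x : ℤ → K` with `sup_i ‖x i‖ < ∞` and `‖x i‖ → 0` as `i → -∞`. -/
def mixedField (K : Type*) [NormedField K] : Set (ℤ → K) :=
  {x | BddAbove (Set.range fun i : ℤ => ‖x i‖) ∧
    Tendsto (fun i : ℤ => ‖x i‖) atBot (nhds 0)}

/-- The subset `Σ_i 𝔭^{n_i} t^i` of `K{{t}}`-coefficient families. -/
def latticeSetM [NormedField K] (q : ℝ) (n : ℤ → WithBot ℤ) : Set (ℤ → K) :=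
  {x | ∀ i : ℤ, memB q (x i) (n i)}

/-- A net `(n_i) ⊂ ℤ ∪ {-∞}` defines an open lattice of `K{{t}}` when it is bounded
above and `n_i → -∞` as `i → ∞`. -/
def MixedAdmNet (n : ℤ → WithBot ℤ) : Prop :=
  (∃ c : ℤ, ∀ i : ℤ, n i ≤ (c : WithBot ℤ)) ∧
  (∀ d : ℤ, ∃ i₀ : ℤ, ∀ i ≥ i₀, n i ≤ (d : WithBot ℤ))

private theorem aux_nonarch_sum {K : Type*} [NormedField K]
    (hna : IsNonarchimedean fun a : K => ‖a‖)
    {ι : Type*} (s : Finset ι) (g : ι → K) (B : ℝ) (hB : 0 ≤ B)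
    (h : ∀ x ∈ s, ‖g x‖ ≤ B) : ‖∑ x ∈ s, g x‖ ≤ B := by
  classical
  induction s using Finset.induction_on with
  | empty => simpa using hB
  | insert _ _ hx ih =>
    rw [Finset.sum_insert hx]
    refine le_trans (hna _ _) (max_le (h _ (Finset.mem_insert_self _ _)) ?_)
    exact ih fun x hx => h x (Finset.mem_insert_of_mem hx)

/-- in `K{{t}}`, if `C = Σ_i 𝔭^{k_i} t^i` with `(k_i)` bounded below and
there is a decreasing sequence `(j_h) ⊂ ℤ_{<0}` with `(k_{j_h})` bounded above, then `C`
is not compactoid: there is an open lattice `Λ` such that `C ⊄ Λ + 𝒪x₁ + ⋯ + 𝒪x_m` for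
any finitely many `x₁, …, x_m ∈ K{{t}}`. -/
theorem not_compactoid_of_not_tendsto [NontriviallyNormedField K]
    (hna : IsNonarchimedean fun a : K => ‖a‖) (q : ℝ) (hq : 1 < q)
    (hval : ∀ a : K, a ≠ 0 → ∃ m : ℤ, ‖a‖ = q ^ m)
    (hsurj : ∀ m : ℤ, ∃ a : K, ‖a‖ = q ^ m)
    (k : ℤ → WithTop ℤ) (hbdd : ∃ d : ℤ, ∀ i : ℤ, (d : WithTop ℤ) ≤ k i)
    (j : ℕ → ℤ) (hj : StrictAnti j) (hjneg : ∀ h : ℕ, j h < 0)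
    (M : ℤ) (hM : ∀ h : ℕ, k (j h) ≤ (M : WithTop ℤ)) :
    ∃ n : ℤ → WithBot ℤ, MixedAdmNet n ∧
      ∀ (m : ℕ) (xs : Fin m → (ℤ → K)), (∀ s : Fin m, xs s ∈ mixedField K) →
        ¬ ({x | x ∈ mixedField K ∧ ∀ i : ℤ, memT q (x i) (k i)} ⊆
            {y : ℤ → K | ∃ z ∈ latticeSetM (K := K) q n, ∃ a : Fin m → K,
              (∀ s : Fin m, ‖a s‖ ≤ 1) ∧ y = z + ∑ s : Fin m, a s • xs s}) := by
  have hq0 : (0 : ℝ) < q := lt_trans one_pos hq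
  refine ⟨fun i => ((M + 1 - max i 0 : ℤ) : WithBot ℤ), ⟨⟨M + 1, fun i => ?_⟩,
    fun d => ⟨max (M + 1 - d) 0, fun i hi => ?_⟩⟩, ?_⟩
  · exact WithBot.coe_le_coe.mpr (by omega)
  · exact WithBot.coe_le_coe.mpr (by omega)
  intro m xs hxs hsub
  -- choose h far enough out so all xs are small at coordinate j h
  have hsmall : ∀ s : Fin m, ∃ i₁ : ℤ, ∀ i ≤ i₁, ‖xs s i‖ ≤ q ^ (-(M + 1)) := by
    intro s
    have := (hxs s).2
    have hpos : (0 : ℝ) < q ^ (-(M + 1)) := zpow_pos hq0 _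
    have := Metric.tendsto_nhds.mp this _ hpos
    rcases (eventually_atBot).mp this with ⟨i₁, hi₁⟩
    refine ⟨i₁, fun i hi => ?_⟩
    have := hi₁ i hi
    rw [Real.dist_eq] at this
    have : |‖xs s i‖| ≤ q ^ (-(M + 1)) := by simpa using this.le
    exact le_trans (le_abs_self _) this
  choose ib hib using hsmall
  -- find h with j h ≤ min of all ib s (and ≤ anything); j h ≤ j 0 - h
  obtain ⟨I, hI⟩ : ∃ I : ℤ, ∀ s : Fin m, I ≤ ib s := by
    rcases m with - | m
    · exact ⟨0, fun s => s.elim0⟩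
    · exact ⟨Finset.univ.inf' ⟨0, Finset.mem_univ _⟩ ib,
        fun s => Finset.inf'_le _ (Finset.mem_univ s)⟩
  have hjatBot : ∀ N : ℤ, ∃ h : ℕ, j h ≤ N := by
    intro N
    have key : ∀ h : ℕ, j h ≤ j 0 - h := by
      intro h
      induction h with
      | zero => simp
      | succ p ih =>
        have := hj (show p < p + 1 by omega)
        push_cast
        push_cast at ih
        omega
    obtain ⟨h, hh⟩ : ∃ h : ℕ, j 0 - (h : ℤ) ≤ N := ⟨(j 0 - N).toNat, by omega⟩
    exact ⟨h, le_trans (key h) hh⟩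
  obtain ⟨h, hh⟩ := hjatBot I
  -- k (j h) is a finite integer κ ≤ M
  have hne : k (j h) ≠ ⊤ := fun ht => by
    have := hM h; rw [ht] at this; exact absurd this (by simp)
  obtain ⟨κ, hκ⟩ := WithTop.ne_top_iff_exists.mp hne
  have hκM : κ ≤ M := by
    have := hM h
    rw [← hκ] at this
    exact_mod_cast this
  obtain ⟨c, hc⟩ := hsurj (-κ)
  have hcpos : 0 < ‖c‖ := by rw [hc]; exact zpow_pos hq0 _
  -- the witness element of C
  set y : ℤ → K := fun i => if i = j h then c else 0 with hy
  have hymem : y ∈ mixedField K := by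
    constructor
    · refine ⟨‖c‖, fun r hr => ?_⟩
      obtain ⟨i, rfl⟩ := hr
      by_cases hi : i = j h <;> simp [hy, hi, hcpos.le]
    · refine Tendsto.congr' ?_ tendsto_const_nhds
      filter_upwards [eventually_le_atBot (j h - 1)] with i hi
      have : i ≠ j h := by omega
      simp [hy, this]
  have hyC : ∀ i : ℤ, memT q (y i) (k i) := by
    intro i
    by_cases hi : i = j h
    · rw [hi, ← hκ]
      show ‖y (j h)‖ ≤ q ^ (-κ)
      simp [hy, hc, zpow_neg]
    · have : y i = 0 := by simp [hy, hi]
      rw [this]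
      induction k i using WithTop.recTopCoe with
      | top => rfl
      | coe κ' => show ‖(0 : K)‖ ≤ q ^ (-κ'); simp [le_of_lt (zpow_pos hq0 _)]
  obtain ⟨z, hz, a, ha, heq⟩ := hsub ⟨hymem, hyC⟩
  -- evaluate at j h and derive a contradiction
  have hyval : ‖y (j h)‖ = q ^ (-κ) := by simp [hy, hc]
  have hzval : ‖z (j h)‖ ≤ q ^ (-(M + 1)) := by
    have hb := hz (j h)
    have hmax : M + 1 - max (j h) 0 = M + 1 := by have := hjneg h; omega
    dsimp only at hb
    rw [hmax] at hb
    exact hb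
  have hsumval : ‖(∑ s : Fin m, a s • xs s) (j h)‖ ≤ q ^ (-(M + 1)) := by
    rw [Finset.sum_apply]
    refine aux_nonarch_sum hna _ _ _ (le_of_lt (zpow_pos hq0 _)) fun s _ => ?_
    rw [Pi.smul_apply, smul_eq_mul, norm_mul]
    calc ‖a s‖ * ‖xs s (j h)‖ ≤ 1 * (q ^ (-(M + 1))) := by
          exact mul_le_mul (ha s) (hib s (j h) (le_trans hh (hI s))) (norm_nonneg _)
            zero_le_one
      _ = q ^ (-(M + 1)) := one_mul _
  have : ‖y (j h)‖ ≤ q ^ (-(M + 1)) := by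
    rw [heq, Pi.add_apply]
    exact le_trans (hna _ _) (max_le hzval hsumval)
  rw [hyval] at this
  have hlt : q ^ (-(M + 1)) < q ^ (-κ) := by
    apply zpow_lt_zpow_right₀ hq
    omega
  exact absurd this (not_le.mpr hlt)
end

section
/- In K((t)) with the higher topology, every basic compactoid O-submodule B = Σ_i p^{k_i} t^i (k_i = ∞ for all i below some bound) is compactoid: for every open lattice Λ = Σ_i p^{n_i} t^i there exist finitely many elements x_1, …, x_m ∈ K((t)) with B ⊆ Λ + Ox_1 + ⋯ + Ox_m. -/
/-!
Elements of `B` vanish below `j₀`, and `Λ` imposes no condition from `i₀` on, so only the finitely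
many coefficients with `j₀ ≤ i < i₀` have to be absorbed. In each of these degrees `𝔭^{k_i}` is
the `𝒪`-module generated by one element `b_i` (an element of norm `q^{-k_i}`, or `0` when
`k_i = ∞`), so the monomials `b_i tⁱ` do the job: for `y ∈ B` the series `y - Σ (y_i / b_i) b_i tⁱ`
vanishes below `i₀`, hence lies in `Λ`.
-/

open Filter

variable {K : Type*}

namespace HahnSeries

variable {Γ R ι : Type*} [PartialOrder Γ] [Semiring R] [Fintype ι]

theorem coeff_sum_smul_single_apply {f : ι → Γ} (hf : f.Injective) (a c : ι → R) (s : ι) :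
    (∑ t, a t • single (f t) (c t)).coeff (f s) = a s * c s := by
  rw [coeff_sum, Fintype.sum_eq_single s fun t hts => ?_]
  · rw [coeff_smul, coeff_single_same, smul_eq_mul]
  · rw [coeff_smul, coeff_single_of_ne (hf.ne hts.symm), smul_zero]

theorem coeff_sum_smul_single_of_notMem_range {f : ι → Γ} (a c : ι → R) {g : Γ}
    (hg : g ∉ Set.range f) : (∑ t, a t • single (f t) (c t)).coeff g = 0 :=
  (coeff_sum g).trans <| Finset.sum_eq_zero fun t _ => by
    rw [coeff_smul, coeff_single_of_ne fun h => hg ⟨t, h.symm⟩, smul_zero]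

end HahnSeries

section NormedField

variable [NormedField K] {q : ℝ}

theorem memB_zero (hq : 0 ≤ q) (m : WithBot ℤ) : memB q (0 : K) m := by
  cases m with
  | bot => trivial
  | coe c => exact (norm_zero (E := K)).trans_le (zpow_nonneg hq _)

theorem memT_exists_generator (hq : 0 < q) (hsurj : ∀ m : ℤ, ∃ a : K, ‖a‖ = q ^ m)
    (c : WithTop ℤ) : ∃ b : K, ∀ a : K, memT q a c → ∃ u : K, ‖u‖ ≤ 1 ∧ u * b = a := by
  cases c with
  | top => exact ⟨0, fun a (ha : a = 0) => ⟨0, by simp, by simp [ha]⟩⟩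
  | coe c =>
    obtain ⟨b, hb⟩ := hsurj (-c)
    have hb0 : b ≠ 0 := norm_pos_iff.mp (hb ▸ zpow_pos hq _)
    refine ⟨b, fun a (ha : ‖a‖ ≤ q ^ (-c)) => ⟨a / b, ?_, div_mul_cancel₀ a hb0⟩⟩
    rwa [norm_div, hb, div_le_one (zpow_pos hq _)]

end NormedField

theorem basic_compactoid_is_compactoid_general [NontriviallyNormedField K]
    (q : ℝ) (hq : 1 < q)
    (hsurj : ∀ m : ℤ, ∃ a : K, ‖a‖ = q ^ m)
    (k : ℤ → WithTop ℤ) (hk : ∃ j₀ : ℤ, ∀ i < j₀, k i = ⊤)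
    (n : ℤ → WithBot ℤ) (hn : AdmNet n) :
    ∃ (m : ℕ) (xs : Fin m → LaurentSeries K),
      bddSet (K := K) q k ⊆
        {y : LaurentSeries K | ∃ z ∈ latticeSet (K := K) q n, ∃ a : Fin m → K,
          (∀ s : Fin m, ‖a s‖ ≤ 1) ∧ y = z + ∑ s : Fin m, a s • xs s} := by
  obtain ⟨i₀, hi₀⟩ := hn
  obtain ⟨j₀, hj₀⟩ := hk
  have hq₀ : 0 < q := one_pos.trans hq
  let m := (i₀ - j₀).toNat
  let f : Fin m → ℤ := fun s => j₀ + s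
  have hf : f.Injective := fun s t h => Fin.ext (by simpa [f] using h)
  choose b hb using fun s => memT_exists_generator hq₀ hsurj (k (f s))
  refine ⟨m, fun s => HahnSeries.single (f s) (b s), fun y hy => ?_⟩
  choose u hu_norm hu_mul using fun s => hb s _ (hy (f s))
  refine ⟨y - ∑ s, u s • HahnSeries.single (f s) (b s), fun i => ?_, u, hu_norm,
    (sub_add_cancel _ _).symm⟩
  by_cases hi : i ∈ Set.range f
  · obtain ⟨s, rfl⟩ := hi
    rw [HahnSeries.coeff_sub, HahnSeries.coeff_sum_smul_single_apply hf, hu_mul, sub_self]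
    exact memB_zero hq₀.le _
  have hout : i < j₀ ∨ i₀ ≤ i := by
    by_contra! h
    exact hi ⟨⟨(i - j₀).toNat, by omega⟩, by simp only [f]; omega⟩
  rcases hout with hij | hii
  · have hy_i : memT q (y.coeff i) ⊤ := hj₀ i hij ▸ hy i
    rw [HahnSeries.coeff_sub, HahnSeries.coeff_sum_smul_single_of_notMem_range _ _ hi, sub_zero,
      show y.coeff i = 0 from hy_i]
    exact memB_zero hq₀.le _
  · rw [hi₀ i hii]
    trivial

/-- every basic compactoid `𝒪`-submodule `B = Σ_i 𝔭^{k_i} t^i` of `K((t))`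
(with `k_i = ∞` for all `i` below some bound) is compactoid: for every open lattice
`Λ = Σ_i 𝔭^{n_i} t^i` there are finitely many `x₁, …, x_m ∈ K((t))` with
`B ⊆ Λ + 𝒪x₁ + ⋯ + 𝒪x_m`. -/
theorem basic_compactoid_is_compactoid [NontriviallyNormedField K]
    (hna : IsNonarchimedean fun a : K => ‖a‖) (q : ℝ) (hq : 1 < q)
    (hval : ∀ a : K, a ≠ 0 → ∃ m : ℤ, ‖a‖ = q ^ m)
    (hsurj : ∀ m : ℤ, ∃ a : K, ‖a‖ = q ^ m)
    (k : ℤ → WithTop ℤ) (hk : ∃ j₀ : ℤ, ∀ i < j₀, k i = ⊤)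
    (n : ℤ → WithBot ℤ) (hn : AdmNet n) :
    ∃ (m : ℕ) (xs : Fin m → LaurentSeries K),
      bddSet (K := K) q k ⊆
        {y : LaurentSeries K | ∃ z ∈ latticeSet (K := K) q n, ∃ a : Fin m → K,
          (∀ s : Fin m, ‖a s‖ ≤ 1) ∧ y = z + ∑ s : Fin m, a s • xs s} :=
  basic_compactoid_is_compactoid_general q hq hsurj k hk n hn
end

section
/- Multiplication μ : K((t)) × K((t)) → K((t)) is not continuous at (0,0) for the higher topology: there exists an open lattice Λ_0 such that for every open lattice Λ, the set of products μ(Λ, Λ) = {xy : x, y ∈ Λ} is not contained in Λ_0; in fact μ(Λ, Λ) generates all of K((t)), i.e. the O-module spanned by μ(Λ,Λ) is K((t)). -/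
open Filter

variable {K : Type*}

/-!
An open lattice `Λ = Σ 𝔭^{n_i} t^i` constrains only the coefficients of index `i < i₀`, where
`n_i = -∞` for `i ≥ i₀`. So `t^{i₀} b⁻¹ ∈ Λ` for every `b ≠ 0`, while for any `x` the series
`b x t^{-i₀}` lies in `Λ` once `b` is small, since only the finitely many coefficients between
`ord x - i₀` and `i₀` are constrained. Their product is `x`, hence `Λ · Λ = K((t))`, which is
too large to fit into any lattice with a finite `n_i`.
-/

open Pointwise

section LaurentLattice

variable [NormedField K] {q : ℝ} {n : ℤ → WithBot ℤ}

theorem memB_iff_norm_mul_wB_le_one (hq : 0 < q) (a : K) (m : WithBot ℤ) :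
    memB q a m ↔ ‖a‖ * wB q m ≤ 1 := by
  cases m with
  | bot => simp [memB, wB]
  | coe k =>
    simp only [memB, wB, WithBot.recBotCoe_coe, zpow_neg]
    rw [← le_div_iff₀ (zpow_pos hq k), one_div]

theorem single_mem_latticeSet (hq : 0 < q) {j : ℤ} {a : K} (h : memB q a (n j)) :
    HahnSeries.single j a ∈ latticeSet q n := by
  intro i
  by_cases hij : i = j
  · subst hij
    rwa [HahnSeries.coeff_single_same]
  · simp [HahnSeries.coeff_single_of_ne hij, memB_iff_norm_mul_wB_le_one hq]

theorem AdmNet.bddAbove_norm_coeff_mul_wB (hn : AdmNet n) (q : ℝ) (y : LaurentSeries K) :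
    BddAbove (Set.range fun i => ‖y.coeff i‖ * wB q (n i)) := by
  obtain ⟨i₀, hi₀⟩ := hn
  let f i := ‖y.coeff i‖ * wB q (n i)
  have hf : Set.range f ⊆ f '' Set.Ico y.order i₀ ∪ {0} := by
    rintro _ ⟨i, rfl⟩
    by_cases hlo : i < y.order
    · simp [f, HahnSeries.coeff_eq_zero_of_lt_order hlo]
    by_cases hhi : i₀ ≤ i
    · simp [f, hi₀ i hhi, wB]
    · exact Or.inl ⟨i, ⟨not_lt.1 hlo, not_le.1 hhi⟩, rfl⟩
  exact (((Set.finite_Ico _ _).image f).union (Set.finite_singleton 0)).bddAbove.mono hf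

theorem sn_nonneg (hq : 0 < q) (y : LaurentSeries K) : 0 ≤ sn q n y := by
  refine Real.iSup_nonneg fun i => mul_nonneg (norm_nonneg _) ?_
  cases n i with
  | bot => exact le_rfl
  | coe k => exact (zpow_pos hq k).le

theorem smul_mem_latticeSet (hq : 0 < q) (hn : AdmNet n) {b : K} {y : LaurentSeries K}
    (hb : ‖b‖ * sn q n y ≤ 1) : b • y ∈ latticeSet q n := by
  intro i
  rw [memB_iff_norm_mul_wB_le_one hq, HahnSeries.coeff_smul, smul_eq_mul, norm_mul, mul_assoc]
  exact (mul_le_mul_of_nonneg_left (le_ciSup (hn.bddAbove_norm_coeff_mul_wB q y) i)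
    (norm_nonneg b)).trans hb

end LaurentLattice

section NontriviallyNormed

variable [NontriviallyNormedField K] {q : ℝ} {n : ℤ → WithBot ℤ}

theorem exists_smul_mem_latticeSet (hq : 0 < q) (hn : AdmNet n) (y : LaurentSeries K) :
    ∃ b : K, b ≠ 0 ∧ b • y ∈ latticeSet q n := by
  have hs := sn_nonneg (n := n) hq y
  obtain ⟨b, hb0, hb⟩ :=
    NormedField.exists_norm_lt K (inv_pos.2 (by linarith : 0 < sn q n y + 1))
  refine ⟨b, norm_pos_iff.1 hb0, smul_mem_latticeSet hq hn ?_⟩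
  calc ‖b‖ * sn q n y ≤ (sn q n y + 1)⁻¹ * sn q n y := by gcongr
    _ ≤ 1 := inv_mul_le_one_of_le₀ (by linarith) (by linarith)

theorem latticeSet_mul_self_eq_univ (hq : 0 < q) (hn : AdmNet n) :
    latticeSet (K := K) q n * latticeSet q n = Set.univ := by
  refine Set.eq_univ_of_forall fun x => ?_
  obtain ⟨i₀, hi₀⟩ := id hn
  obtain ⟨b, hb, hmem⟩ := exists_smul_mem_latticeSet hq hn (x * HahnSeries.single (-i₀) 1)
  have hz : HahnSeries.single i₀ b⁻¹ ∈ latticeSet q n :=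
    single_mem_latticeSet hq (by rw [hi₀ i₀ le_rfl]; trivial)
  refine ⟨_, hmem, _, hz, ?_⟩
  calc b • (x * HahnSeries.single (-i₀) 1) * HahnSeries.single i₀ b⁻¹
      = x * (HahnSeries.single (-i₀) 1 * HahnSeries.single 0 b * HahnSeries.single i₀ b⁻¹) := by
        rw [← HahnSeries.C_mul_eq_smul, HahnSeries.C_apply]; ring
    _ = x := by
        rw [HahnSeries.single_mul_single, HahnSeries.single_mul_single, add_zero, neg_add_cancel,
          one_mul, mul_inv_cancel₀ hb, HahnSeries.single_zero_one, mul_one]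

theorem latticeSet_ne_univ {j k : ℤ} (hj : n j = k) : latticeSet (K := K) q n ≠ Set.univ := by
  obtain ⟨b, hb⟩ := NormedField.exists_lt_norm K (q ^ (-k))
  intro h
  have hmem : HahnSeries.single j b ∈ latticeSet q n := h ▸ Set.mem_univ _
  specialize hmem j
  rw [HahnSeries.coeff_single_same, hj] at hmem
  exact hb.not_ge hmem

end NontriviallyNormed

theorem multiplication_not_continuous_general [NontriviallyNormedField K]
    (q : ℝ) (hq : 1 < q) :
    (∃ n₀ : ℤ → WithBot ℤ, AdmNet n₀ ∧
      ∀ n : ℤ → WithBot ℤ, AdmNet n →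
        ¬ ({z : LaurentSeries K | ∃ x ∈ latticeSet (K := K) q n,
              ∃ y ∈ latticeSet (K := K) q n, z = x * y} ⊆ latticeSet (K := K) q n₀)) ∧
    (∀ n : ℤ → WithBot ℤ, AdmNet n → ∀ x : LaurentSeries K,
      ∃ (m : ℕ) (a : Fin m → K) (y z : Fin m → LaurentSeries K),
        (∀ s : Fin m, ‖a s‖ ≤ 1) ∧
        (∀ s : Fin m, y s ∈ latticeSet (K := K) q n ∧ z s ∈ latticeSet (K := K) q n) ∧
        x = ∑ s : Fin m, a s • (y s * z s)) := by
  have hprod (n : ℤ → WithBot ℤ) (hn : AdmNet n) (x : LaurentSeries K) :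
      ∃ y ∈ latticeSet q n, ∃ z ∈ latticeSet q n, y * z = x :=
    Set.mem_mul.1 <|
      latticeSet_mul_self_eq_univ (K := K) (zero_lt_one.trans hq) hn ▸ Set.mem_univ x
  refine ⟨⟨fun i => if i = 0 then (0 : ℤ) else ⊥, ⟨1, fun i hi => if_neg (by omega)⟩,
    fun n hn hsub => ?_⟩, fun n hn x => ?_⟩
  · refine latticeSet_ne_univ (K := K) (j := 0) (k := 0) (if_pos rfl)
      (Set.eq_univ_of_forall fun x => hsub ?_)
    obtain ⟨y, hy, z, hz, rfl⟩ := hprod n hn x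
    exact ⟨y, hy, z, hz, rfl⟩
  · obtain ⟨y, hy, z, hz, rfl⟩ := hprod n hn x
    exact ⟨1, fun _ => 1, fun _ => y, fun _ => z, fun _ => norm_one.le, fun _ => ⟨hy, hz⟩,
      by simp⟩

/-- multiplication on `K((t))` is not continuous at `(0,0)` for the higher
topology: there is an open lattice `Λ₀` such that for every open lattice `Λ` the set
`μ(Λ,Λ)` is not contained in `Λ₀`; in fact the `𝒪`-module spanned by `μ(Λ,Λ)` is all of
`K((t))`. -/
theorem multiplication_not_continuous [NontriviallyNormedField K]
    (hna : IsNonarchimedean fun a : K => ‖a‖) (q : ℝ) (hq : 1 < q)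
    (hval : ∀ a : K, a ≠ 0 → ∃ m : ℤ, ‖a‖ = q ^ m)
    (hsurj : ∀ m : ℤ, ∃ a : K, ‖a‖ = q ^ m) :
    (∃ n₀ : ℤ → WithBot ℤ, AdmNet n₀ ∧
      ∀ n : ℤ → WithBot ℤ, AdmNet n →
        ¬ ({z : LaurentSeries K | ∃ x ∈ latticeSet (K := K) q n,
              ∃ y ∈ latticeSet (K := K) q n, z = x * y} ⊆ latticeSet (K := K) q n₀)) ∧
    (∀ n : ℤ → WithBot ℤ, AdmNet n → ∀ x : LaurentSeries K,
      ∃ (m : ℕ) (a : Fin m → K) (y z : Fin m → LaurentSeries K),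
        (∀ s : Fin m, ‖a s‖ ≤ 1) ∧
        (∀ s : Fin m, y s ∈ latticeSet (K := K) q n ∧ z s ∈ latticeSet (K := K) q n) ∧
        x = ∑ s : Fin m, a s • (y s * z s)) :=
  multiplication_not_continuous_general q hq
end

section
/- For the basic compactoid submodule B = Σ_i p^{k_i} t^i of K((t)) and the admissible seminorm ‖·‖ attached to the net (−k_{−i})_{i∈Z}, we have for every x ∈ K((t)): ‖x‖ ≤ q^n if and only if |π_x|_B ≤ q^n, where |π_x|_B = sup_{y ∈ B} |π_0(xy)|. -/
open Filter

variable {K : Type*}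

/-- The map `m ↦ -m` from `ℤ ∪ {∞}` to `ℤ ∪ {-∞}`, with `-(∞) = -∞`. -/
def negT : WithTop ℤ → WithBot ℤ :=
  WithTop.recTopCoe ⊥ fun j : ℤ => ((-j : ℤ) : WithBot ℤ)

/-!
Since `π₀(xy) = Σ_i x_i y_{-i}` and `y ∈ B` means `|y_{-i}| ≤ q^{-k_{-i}}`, the ultrametric
inequality bounds `|π₀(xy)|` by `sup_i |x_i| q^{-k_{-i}} = ‖x‖`; conversely the term of index `i`
is attained by a monomial `y = a t^{-i} ∈ B` with `|a| = q^{-k_{-i}}`, which exists because the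
value group is all of `q^ℤ`.
-/

lemma coeff_zero_mul_single_neg [Semiring K] (x : LaurentSeries K) (i : ℤ) (a : K) :
    (x * HahnSeries.single (-i) a).coeff 0 = x.coeff i * a := by
  simpa using HahnSeries.coeff_mul_single_add (r := a) (x := x) (a := i) (b := -i)

lemma wB_negT (q : ℝ) (m : WithTop ℤ) : wB q (negT m) = wT q m := by
  cases m <;> rfl

lemma admNet_negT_comp_neg {k : ℤ → WithTop ℤ} (hk : ∃ j₀ : ℤ, ∀ i < j₀, k i = ⊤) :
    AdmNet fun i => negT (k (-i)) := by
  obtain ⟨j₀, hj₀⟩ := hk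
  refine ⟨1 - j₀, fun i hi => ?_⟩
  show negT (k (-i)) = ⊥
  rw [hj₀ (-i) (by omega)]
  rfl

section NormedField

variable [NormedField K] {q : ℝ}

lemma norm_le_wT_of_memT {a : K} {m : WithTop ℤ} (h : memT q a m) : ‖a‖ ≤ wT q m := by
  cases m with
  | top => simp [show a = 0 from h, wT]
  | coe j => exact h

lemma memT_of_norm_eq_wT {a : K} {m : WithTop ℤ} (h : ‖a‖ = wT q m) : memT q a m := by
  cases m with
  | top => exact norm_eq_zero.1 h
  | coe j => exact h.le

lemma memT_zero (hq : 0 ≤ q) (m : WithTop ℤ) : memT q (0 : K) m := by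
  cases m with
  | top => rfl
  | coe j => exact (norm_zero (E := K)).trans_le (zpow_nonneg hq _)

lemma exists_norm_eq_wT (hsurj : ∀ m : ℤ, ∃ a : K, ‖a‖ = q ^ m) (m : WithTop ℤ) :
    ∃ a : K, ‖a‖ = wT q m := by
  cases m with
  | top => exact ⟨0, by simp [wT]⟩
  | coe j => exact hsurj (-j)

lemma single_mem_bddSet (hq : 0 ≤ q) {k : ℤ → WithTop ℤ} {j : ℤ} {a : K}
    (ha : memT q a (k j)) : HahnSeries.single j a ∈ bddSet q k := by
  intro m
  by_cases hm : m = j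
  · subst hm
    rwa [HahnSeries.coeff_single_same]
  · rw [HahnSeries.coeff_single_of_ne hm]
    exact memT_zero hq _

lemma sn_bddAbove {n : ℤ → WithBot ℤ} (hn : AdmNet n) (x : LaurentSeries K) :
    BddAbove (Set.range fun i => ‖x.coeff i‖ * wB q (n i)) := by
  obtain ⟨i₀, hi₀⟩ := hn
  refine Set.Finite.bddAbove <|
    (((Set.finite_Ico x.order i₀).image fun i => ‖x.coeff i‖ * wB q (n i)).insert 0).subset ?_
  rintro _ ⟨i, rfl⟩
  by_cases hi : i ∈ Set.Ico x.order i₀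
  · exact Or.inr ⟨i, hi, rfl⟩
  · left
    rcases not_and_or.1 (Set.mem_Ico.not.1 hi) with h | h
    · simp [HahnSeries.coeff_eq_zero_of_lt_order (not_le.1 h)]
    · simp [hi₀ i (not_lt.1 h), wB]

lemma sn_le_iff {n : ℤ → WithBot ℤ} (hn : AdmNet n) (x : LaurentSeries K) (C : ℝ) :
    sn q n x ≤ C ↔ ∀ i, ‖x.coeff i‖ * wB q (n i) ≤ C :=
  ciSup_le_iff (sn_bddAbove hn x)

lemma norm_coeff_zero_mul_le (hna : IsNonarchimedean fun a : K => ‖a‖)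
    {k : ℤ → WithTop ℤ} {x y : LaurentSeries K} (hy : y ∈ bddSet q k) {C : ℝ} (hC : 0 ≤ C)
    (hx : ∀ i, ‖x.coeff i‖ * wT q (k (-i)) ≤ C) : ‖(x * y).coeff 0‖ ≤ C := by
  have := IsUltrametricDist.isUltrametricDist_of_isNonarchimedean_norm hna
  rw [HahnSeries.coeff_mul]
  refine IsUltrametricDist.norm_sum_le_of_forall_le_of_nonneg hC fun ij hij => ?_
  have hj : ij.2 = -ij.1 := by
    have := (Finset.mem_antidiagonal.1 hij).2.2
    omega
  calc ‖x.coeff ij.1 * y.coeff ij.2‖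
      ≤ ‖x.coeff ij.1‖ * wT q (k (-ij.1)) := by
        rw [norm_mul, hj]
        exact mul_le_mul_of_nonneg_left (norm_le_wT_of_memT (hy _)) (norm_nonneg _)
    _ ≤ C := hx ij.1

lemma exists_mem_bddSet_norm_coeff_zero_mul_eq (hq : 0 ≤ q)
    (hsurj : ∀ m : ℤ, ∃ a : K, ‖a‖ = q ^ m) (k : ℤ → WithTop ℤ) (x : LaurentSeries K) (i : ℤ) :
    ∃ y ∈ bddSet q k, ‖(x * y).coeff 0‖ = ‖x.coeff i‖ * wT q (k (-i)) := by
  obtain ⟨a, ha⟩ := exists_norm_eq_wT hsurj (k (-i))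
  refine ⟨HahnSeries.single (-i) a, single_mem_bddSet hq (memT_of_norm_eq_wT ha), ?_⟩
  rw [coeff_zero_mul_single_neg, norm_mul, ha]

end NormedField

theorem seminorm_iff_dual_seminorm_general [NontriviallyNormedField K]
    (hna : IsNonarchimedean fun a : K => ‖a‖) (q : ℝ) (hq : 1 < q)
    (hsurj : ∀ m : ℤ, ∃ a : K, ‖a‖ = q ^ m)
    (k : ℤ → WithTop ℤ) (hk : ∃ j₀ : ℤ, ∀ i < j₀, k i = ⊤)
    (x : LaurentSeries K) (n : ℤ) :
    sn q (fun i => negT (k (-i))) x ≤ q ^ n ↔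
      ∀ y ∈ bddSet (K := K) q k, ‖(x * y).coeff 0‖ ≤ q ^ n := by
  have hq0 : 0 ≤ q := by linarith
  have hC : 0 ≤ q ^ n := zpow_nonneg hq0 n
  simp only [sn_le_iff (admNet_negT_comp_neg hk), wB_negT]
  constructor
  · exact fun hx y hy => norm_coeff_zero_mul_le hna hy hC hx
  · intro h i
    obtain ⟨y, hy, hxy⟩ := exists_mem_bddSet_norm_coeff_zero_mul_eq hq0 hsurj k x i
    exact hxy ▸ h y hy

/-- for the basic compactoid submodule `B = Σ_i 𝔭^{k_i} t^i` of `K((t))`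
and the admissible seminorm `‖·‖` attached to the net `(-k_{-i})_{i ∈ ℤ}`, for every
`x ∈ K((t))` and `n ∈ ℤ`: `‖x‖ ≤ q^n` iff `|π_x|_B = sup_{y ∈ B} |π₀(xy)| ≤ q^n`. -/
theorem seminorm_iff_dual_seminorm [NontriviallyNormedField K]
    (hna : IsNonarchimedean fun a : K => ‖a‖) (q : ℝ) (hq : 1 < q)
    (hval : ∀ a : K, a ≠ 0 → ∃ m : ℤ, ‖a‖ = q ^ m)
    (hsurj : ∀ m : ℤ, ∃ a : K, ‖a‖ = q ^ m)
    (k : ℤ → WithTop ℤ) (hk : ∃ j₀ : ℤ, ∀ i < j₀, k i = ⊤)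
    (x : LaurentSeries K) (n : ℤ) :
    sn q (fun i => negT (k (-i))) x ≤ q ^ n ↔
      ∀ y ∈ bddSet (K := K) q k, ‖(x * y).coeff 0‖ ≤ q ^ n :=
  seminorm_iff_dual_seminorm_general hna q hq hsurj k hk x n
end

section
/- For x, y ∈ F a standard n-dimensional local field over K, written x = Σ_α x(α) t^α and y = Σ_α y(α) t^α with α ∈ I = Z^{n-1}, the zeroth multi-coefficient of the product satisfies π_0(xy) = Σ_{α∈I} x(−α) y(α), and this sum converges (has well-defined value) in K. -/
open Filter

variable {K : Type*}

/-- The `γ`-th coefficient of the product of two multivariable series, given by the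
Cauchy product formula. -/
noncomputable def mulCoeff [NormedField K] [CompleteSpace K] {m : ℕ}
    (x y : (Fin m → ℤ) → K) (γ : Fin m → ℤ) : K :=
  ∑' α : Fin m → ℤ, x α * y (γ - α)


lemma neg_snoc {m : ℕ} (β : Fin m → ℤ) (i : ℤ) :
    -(Fin.snoc β i : Fin (m+1) → ℤ) = Fin.snoc (-β) (-i) := by
  funext j
  refine Fin.lastCases ?_ (fun j => ?_) j <;>
    simp [Pi.neg_apply, Fin.snoc_last, Fin.snoc_castSucc]

lemma tendsto_cofinite_iff {ι : Type*} [NormedField K] (f : ι → K) :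
    Tendsto f cofinite (nhds 0) ↔ ∀ ε > (0:ℝ), {a | ε ≤ ‖f a‖}.Finite := by
  rw [NormedAddCommGroup.tendsto_nhds_zero]
  constructor
  · intro h ε hε
    have := (h ε hε)
    rw [eventually_cofinite] at this
    simpa [not_lt] using this
  · intro h ε hε
    rw [eventually_cofinite]
    simpa [not_lt] using h ε hε

lemma finite_slices [NormedField K] {m : ℕ} (x y : (Fin (m+1) → ℤ) → K) (ε : ℝ)
    (a b : ℤ)
    (hout : ∀ (β : Fin m → ℤ) (i : ℤ), i < a ∨ b < i →
      ‖x (-(Fin.snoc β i : Fin (m+1) → ℤ)) * y (Fin.snoc β i)‖ < ε)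
    (hin : ∀ i : ℤ, {β : Fin m → ℤ |
      ε ≤ ‖x (-(Fin.snoc β i : Fin (m+1) → ℤ)) * y (Fin.snoc β i)‖}.Finite) :
    {α : Fin (m+1) → ℤ | ε ≤ ‖x (-α) * y α‖}.Finite := by
  have hT : (⋃ i ∈ Set.Icc a b, ((fun β : Fin m → ℤ => (Fin.snoc β i : Fin (m+1) → ℤ)) ''
      {β | ε ≤ ‖x (-(Fin.snoc β i : Fin (m+1) → ℤ)) * y (Fin.snoc β i)‖})).Finite :=
    (Set.finite_Icc a b).biUnion (fun i _ => ((hin i).image _))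
  refine hT.subset ?_
  intro α hα
  have hrepr : (Fin.snoc (Fin.init α) (α (Fin.last m)) : Fin (m+1) → ℤ) = α :=
    Fin.snoc_init_self α
  set i := α (Fin.last m) with hi
  set β := Fin.init α with hβ
  have hα' : ε ≤ ‖x (-(Fin.snoc β i : Fin (m+1) → ℤ)) * y (Fin.snoc β i)‖ := by
    rw [hrepr]; exact hα
  have hiab : i ∈ Set.Icc a b := by
    by_contra hc
    simp only [Set.mem_Icc, not_and_or, not_le] at hc
    exact absurd hα' (not_le.mpr (hout β i hc))
  exact Set.mem_biUnion hiab ⟨β, hα', hrepr⟩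

lemma mixed_tendsto [NormedField K] :
    ∀ (m : ℕ) (x y : (Fin m → ℤ) → K), MixedAdm x → MixedAdm y →
      Tendsto (fun α => x (-α) * y α) cofinite (nhds 0)
  | 0, x, y, _, _ => by
      have : (cofinite : Filter (Fin 0 → ℤ)) = ⊥ := Filter.cofinite_eq_bot
      rw [this]; exact tendsto_bot
  | m + 1, x, y, hx, hy => by
      obtain ⟨⟨Cx, hCx⟩, hxt, hxs⟩ := hx
      obtain ⟨⟨Cy, hCy⟩, hyt, hys⟩ := hy
      rw [mem_upperBounds] at hCx hCy
      simp only [Set.forall_mem_range] at hCx hCy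
      have hCx0 : 0 ≤ Cx := le_trans (norm_nonneg _) (hCx 0)
      have hCy0 : 0 ≤ Cy := le_trans (norm_nonneg _) (hCy 0)
      rw [tendsto_cofinite_iff]
      intro ε hε
      set C : ℝ := max Cx Cy + 1 with hC
      have hC0 : 0 < C := by positivity
      have hCxC : Cx < C := lt_of_le_of_lt (le_max_left _ _) (lt_add_one _)
      have hCyC : Cy < C := lt_of_le_of_lt (le_max_right _ _) (lt_add_one _)
      have hεC : 0 < ε / C := by positivity
      obtain ⟨Nx, hNx⟩ := eventually_atBot.mp (hxt.eventually_lt_const hεC)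
      obtain ⟨Ny, hNy⟩ := eventually_atBot.mp (hyt.eventually_lt_const hεC)
      refine finite_slices x y ε Ny (-Nx) ?_ ?_
      · intro β i hi
        rcases hi with hi | hi
        · -- i < Ny : the y-slice has small sup norm
          have hsup : ‖y (Fin.snoc β i)‖ ≤ ⨆ β' : Fin m → ℤ, ‖y (Fin.snoc β' i)‖ :=
            le_ciSup (f := fun β' : Fin m → ℤ => ‖y (Fin.snoc β' i)‖)
              ⟨Cy, by rintro _ ⟨β', rfl⟩; exact hCy _⟩ β
          have h1 : ‖y (Fin.snoc β i)‖ ≤ ε / C := le_of_lt (lt_of_le_of_lt hsup (hNy i hi.le))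
          calc ‖x (-(Fin.snoc β i : Fin (m+1) → ℤ)) * y (Fin.snoc β i)‖
              = ‖x (-(Fin.snoc β i : Fin (m+1) → ℤ))‖ * ‖y (Fin.snoc β i)‖ := norm_mul _ _
            _ ≤ Cx * (ε / C) := mul_le_mul (hCx _) h1 (norm_nonneg _) hCx0
            _ < C * (ε / C) := mul_lt_mul_of_pos_right hCxC hεC
            _ = ε := mul_div_cancel₀ ε hC0.ne'
        · -- -Nx < i, so -i ≤ Nx : the x-slice at -i has small sup norm
          have hi' : -i ≤ Nx := by linarith
          have hsup : ‖x (Fin.snoc (-β) (-i))‖ ≤ ⨆ β' : Fin m → ℤ, ‖x (Fin.snoc β' (-i))‖ :=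
            le_ciSup (f := fun β' : Fin m → ℤ => ‖x (Fin.snoc β' (-i))‖)
              ⟨Cx, by rintro _ ⟨β', rfl⟩; exact hCx _⟩ (-β)
          have h1 : ‖x (Fin.snoc (-β) (-i))‖ ≤ ε / C :=
            le_of_lt (lt_of_le_of_lt hsup (hNx (-i) hi'))
          calc ‖x (-(Fin.snoc β i : Fin (m+1) → ℤ)) * y (Fin.snoc β i)‖
              = ‖x (Fin.snoc (-β) (-i))‖ * ‖y (Fin.snoc β i)‖ := by rw [neg_snoc]; exact norm_mul _ _
            _ ≤ (ε / C) * Cy := mul_le_mul h1 (hCy _) (norm_nonneg _) hεC.le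
            _ < (ε / C) * C := mul_lt_mul_of_pos_left hCyC hεC
            _ = ε := div_mul_cancel₀ ε hC0.ne'
      · intro i
        have hIH := mixed_tendsto m (fun β => x (Fin.snoc β (-i))) (fun β => y (Fin.snoc β i))
          (hxs (-i)) (hys i)
        have := (tendsto_cofinite_iff _).mp hIH ε hε
        simpa [neg_snoc] using this


lemma std_tendsto [NormedField K] (r : ℕ) :
    ∀ (m : ℕ) (x y : (Fin m → ℤ) → K), StdAdm r x → StdAdm r y →
      Tendsto (fun α => x (-α) * y α) cofinite (nhds 0)
  | 0, x, y, _, _ => by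
      have : (cofinite : Filter (Fin 0 → ℤ)) = ⊥ := Filter.cofinite_eq_bot
      rw [this]; exact tendsto_bot
  | m + 1, x, y, hx, hy => by
      by_cases hmr : m + 1 ≤ r
      · rw [StdAdm, if_pos hmr] at hx hy
        exact mixed_tendsto (m + 1) x y hx hy
      · rw [StdAdm, if_neg hmr] at hx hy
        obtain ⟨⟨ix, hix⟩, hxs⟩ := hx
        obtain ⟨⟨iy, hiy⟩, hys⟩ := hy
        rw [tendsto_cofinite_iff]
        intro ε hε
        refine finite_slices x y ε iy (-ix) ?_ ?_
        · intro β i hi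
          rcases hi with hi | hi
          · have : y (Fin.snoc β i) = 0 := hiy i hi β
            simpa [this] using hε
          · have h2 : -i < ix := by linarith
            have : x (-(Fin.snoc β i : Fin (m+1) → ℤ)) = 0 := by
              rw [neg_snoc]; exact hix (-i) h2 (-β)
            simpa [this] using hε
        · intro i
          have hIH := std_tendsto r m (fun β => x (Fin.snoc β (-i))) (fun β => y (Fin.snoc β i))
            (hxs (-i)) (hys i)
          have := (tendsto_cofinite_iff _).mp hIH ε hε
          simpa [neg_snoc] using this

lemma summable_of_tendsto_cofinite [NontriviallyNormedField K] [CompleteSpace K]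
    (hna : IsNonarchimedean fun a : K => ‖a‖) {ι : Type*} {f : ι → K}
    (h : Tendsto f cofinite (nhds 0)) : Summable f := by
  haveI : IsUltrametricDist K :=
    IsUltrametricDist.isUltrametricDist_of_isNonarchimedean_norm hna
  exact NonarchimedeanAddGroup.summable_of_tendsto_cofinite_zero h

/-- for `x, y` in a standard `n`-dimensional local field `F` over `K`,
the sum `Σ_{α ∈ I} x(-α) y(α)` converges in `K` and equals the zeroth multi-coefficient
`π₀(xy)` of the product. -/
theorem coeff_zero_mul_general [NontriviallyNormedField K] [CompleteSpace K]
    (hna : IsNonarchimedean fun a : K => ‖a‖)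
    (m r : ℕ) (hm : 1 ≤ m) (hr : r ≤ m)
    (x y : (Fin m → ℤ) → K) (hx : StdAdm r x) (hy : StdAdm r y) :
    Summable (fun α : Fin m → ℤ => x (-α) * y α) ∧
    mulCoeff x y 0 = ∑' α : Fin m → ℤ, x (-α) * y α := by
  have htend := std_tendsto r m x y hx hy
  have hsum : Summable (fun α : Fin m → ℤ => x (-α) * y α) :=
    summable_of_tendsto_cofinite hna htend
  refine ⟨hsum, ?_⟩
  have hre := (Equiv.neg (Fin m → ℤ)).tsum_eq (fun α => x (-α) * y α)
  simpa [mulCoeff, zero_sub, neg_neg] using hre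
end
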